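/- (Local observer convergence) Consider ẋ = Ax + N(x)x with y = Cx, where N is linear and energy preserving, and the observer ẋ̂ = Ax̂ + N(x̂)x̂ − L(y − Cx̂) with L = P⁻¹R. Suppose B_r(d) is invariant for the state x, Y ⊇ B_r(d), there exist α₁, α₂, α₃ > 0 and symmetric P with α₁I ⪯ P ⪯ α₂I and P A_y + A_yᵀ P + RC + CᵀRᵀ ⪯ −α₃ I for every y ∈ Y, and the initial error satisfies ‖x₀ − x̂₀‖₂ < (α₃/(2γα₂))·√(α₁/α₂), where γ = ‖N‖ is the operator norm of N (into the Frobenius norm). If x₀ ∈ B_r(d), then the error e(t) = x(t) − x̂(t) converges to 0 exponentially as t → ∞. -/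

import Mathlib

/-!
With `V(e) = eᵀPe`, the LMI handles the part of `ė` that is linear in `e`, and the remaining
cubic term is bounded by Cauchy–Schwarz for the form `P`: `|eᵀP N(e)e| ≤ α₂ γ ‖e‖³`. Hence
`V̇ ≤ (−α₃ + 2γα₂‖e‖)‖e‖²`. The smallness of `e₀` leaves room for a level `m > V(e₀)` such
that `‖e‖ ≤ ρ` with `2γα₂ρ < α₃` on `{V ≤ m}`, so `V̇ ≤ −κV` there. Comparing `V` with the
barrier `m e^{−κt/2}` shows that `V` never leaves this sublevel set and decays exponentially,
and `α₁‖e‖² ≤ V` transfers the decay to `e`.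
-/

open Matrix

noncomputable def eucNorm {n : ℕ} (v : Fin n → ℝ) : ℝ := Real.sqrt (∑ i, v i ^ 2)

noncomputable def frobNorm {n : ℕ} (M : Matrix (Fin n) (Fin n) ℝ) : ℝ :=
  Real.sqrt (∑ i, ∑ j, M i j ^ 2)

open Filter Topology

section Norms

attribute [local instance] Matrix.frobeniusNormedAddCommGroup Matrix.frobeniusNormedSpace

variable {n : ℕ}

lemma eucNorm_eq_norm (v : Fin n → ℝ) : eucNorm v = ‖WithLp.toLp 2 v‖ := by
  simp [eucNorm, EuclideanSpace.norm_eq]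

lemma eucNorm_nonneg (v : Fin n → ℝ) : 0 ≤ eucNorm v := Real.sqrt_nonneg _

lemma frobNorm_eq_norm (M : Matrix (Fin n) (Fin n) ℝ) : frobNorm M = ‖M‖ := by
  change _ = ‖WithLp.toLp 2 fun i => WithLp.toLp 2 (M i)‖
  simp only [frobNorm, PiLp.norm_eq_of_L2, Real.norm_eq_abs, sq_abs]
  congr 1
  exact Finset.sum_congr rfl fun i _ => (Real.sq_sqrt (by positivity)).symm

lemma eucNorm_mulVec_le (M : Matrix (Fin n) (Fin n) ℝ) (v : Fin n → ℝ) :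
    eucNorm (M *ᵥ v) ≤ frobNorm M * eucNorm v := by
  simpa [eucNorm_eq_norm, frobNorm_eq_norm, ← replicateCol_mulVec] using
    frobenius_norm_mul M (replicateCol Unit v)

lemma frobNorm_apply_le_sSup_mul (N : (Fin n → ℝ) →ₗ[ℝ] Matrix (Fin n) (Fin n) ℝ)
    (v : Fin n → ℝ) :
    frobNorm (N v) ≤ sSup ((fun v => frobNorm (N v)) '' {v | eucNorm v = 1}) * eucNorm v := by
  let N' : EuclideanSpace ℝ (Fin n) →L[ℝ] Matrix (Fin n) (Fin n) ℝ :=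
    LinearMap.toContinuousLinearMap (N ∘ₗ (WithLp.linearEquiv 2 ℝ (Fin n → ℝ)).toLinearMap)
  have hsphere : (fun v => frobNorm (N v)) '' {v | eucNorm v = 1}
      = (fun w => ‖N' w‖) '' Metric.sphere 0 1 := by
    ext c
    constructor
    · rintro ⟨v, hv, rfl⟩
      exact ⟨WithLp.toLp 2 v, by simpa [eucNorm_eq_norm] using hv, by simp [N', frobNorm_eq_norm]⟩
    · rintro ⟨w, hw, rfl⟩
      exact ⟨WithLp.ofLp w, by simpa [eucNorm_eq_norm] using hw, by simp [N', frobNorm_eq_norm]⟩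
  rw [hsphere]
  convert N'.le_opNorm (WithLp.toLp 2 v) using 2
  · rw [frobNorm_eq_norm]; rfl
  · exact N'.sSup_sphere_eq_norm
  · exact eucNorm_eq_norm v

end Norms

section QuadraticForm

variable {ι : Type*} [Fintype ι] {P : Matrix ι ι ℝ}

lemma Matrix.IsSymm.dotProduct_mulVec_comm (hP : P.IsSymm) (v w : ι → ℝ) :
    v ⬝ᵥ P *ᵥ w = w ⬝ᵥ P *ᵥ v := by
  rw [dotProduct_mulVec, ← mulVec_transpose, hP.eq, dotProduct_comm]

lemma Matrix.IsSymm.dotProduct_mulVec_sq_le (hP : P.IsSymm) (hnn : ∀ v, 0 ≤ v ⬝ᵥ P *ᵥ v)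
    (v w : ι → ℝ) : (v ⬝ᵥ P *ᵥ w) ^ 2 ≤ (v ⬝ᵥ P *ᵥ v) * (w ⬝ᵥ P *ᵥ w) := by
  classical
  have hsymm := LinearMap.BilinForm.isSymm_iff.mp (isSymm_toBilin'_iff_isSymm.mpr hP)
  simpa only [toBilin'_apply'] using
    (toBilin' P).apply_sq_le_of_symm (by simpa only [toBilin'_apply'] using hnn) hsymm v w

end QuadraticForm

section Derivatives

variable {ι κ : Type*} [Fintype ι] [Fintype κ] {f g : ℝ → ι → ℝ} {f' g' : ι → ℝ} {t : ℝ}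

lemma HasDerivAt.dotProduct (hf : HasDerivAt f f' t) (hg : HasDerivAt g g' t) :
    HasDerivAt (fun s => f s ⬝ᵥ g s) (f' ⬝ᵥ g t + f t ⬝ᵥ g') t := by
  have := HasDerivAt.fun_sum (u := Finset.univ) fun i _ =>
    (hasDerivAt_pi.mp hf i).mul (hasDerivAt_pi.mp hg i)
  exact this.congr_deriv Finset.sum_add_distrib

lemma HasDerivAt.mulVec (M : Matrix κ ι ℝ) (hg : HasDerivAt g g' t) :
    HasDerivAt (fun s => M *ᵥ g s) (M *ᵥ g') t :=
  (LinearMap.toContinuousLinearMap (mulVecLin M)).hasFDerivAt.comp_hasDerivAt t hg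

lemma HasDerivAt.dotProduct_mulVec_self {P : Matrix ι ι ℝ} (hP : P.IsSymm)
    (hf : HasDerivAt f f' t) :
    HasDerivAt (fun s => f s ⬝ᵥ P *ᵥ f s) (2 * (f t ⬝ᵥ P *ᵥ f')) t := by
  convert hf.dotProduct (hf.mulVec P) using 1
  rw [hP.dotProduct_mulVec_comm f' (f t)]
  ring

end Derivatives

lemma le_mul_exp_of_deriv_le_neg_mul {V V' : ℝ → ℝ} {m β c : ℝ} (hm : 0 < m) (hβ : 0 ≤ β)
    (hβc : β < c) (hV : ∀ t, HasDerivAt V (V' t) t) (hV0 : V 0 ≤ m)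
    (hV' : ∀ t, 0 ≤ t → V t ≤ m → V' t ≤ -c * V t) {t : ℝ} (ht : 0 ≤ t) :
    V t ≤ m * Real.exp (-β * t) := by
  have hB : ∀ s, HasDerivAt (fun s => m * Real.exp (-β * s)) (-β * (m * Real.exp (-β * s))) s :=
    fun s => (((hasDerivAt_id' s).const_mul (-β)).exp.const_mul m).congr_deriv (by ring)
  refine image_le_of_deriv_right_lt_deriv_boundary
    (fun s _ => (hV s).continuousAt.continuousWithinAt) (fun s _ => (hV s).hasDerivWithinAt)
    (by simpa using hV0) hB (fun s hs hVs => ?_) ⟨ht, le_rfl⟩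
  have hBpos : 0 < m * Real.exp (-β * s) := by positivity
  have hBm : m * Real.exp (-β * s) ≤ m := mul_le_of_le_one_right hm.le
    (Real.exp_le_one_iff.mpr (mul_nonpos_of_nonpos_of_nonneg (neg_nonpos.mpr hβ) hs.1))
  calc V' s ≤ -c * V s := hV' s hs.1 (hVs ▸ hBm)
    _ < -β * (m * Real.exp (-β * s)) := by
        rw [hVs]; exact mul_lt_mul_of_pos_right (neg_lt_neg hβc) hBpos

lemma hasDerivAt_observer_error {ι κ : Type*} [Fintype ι] [Fintype κ] (A : Matrix ι ι ℝ)
    (C : Matrix κ ι ℝ) (L : Matrix ι κ ℝ) (N : (ι → ℝ) →ₗ[ℝ] Matrix ι ι ℝ)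
    {x xh : ℝ → ι → ℝ} {t : ℝ} (hx : HasDerivAt x (A *ᵥ x t + N (x t) *ᵥ x t) t)
    (hxh : HasDerivAt xh (A *ᵥ xh t + N (xh t) *ᵥ xh t - L *ᵥ (C *ᵥ x t - C *ᵥ xh t)) t) :
    HasDerivAt (fun s => x s - xh s)
      (A *ᵥ (x t - xh t) + N (x t - xh t) *ᵥ x t + N (x t) *ᵥ (x t - xh t)
        + L *ᵥ (C *ᵥ (x t - xh t)) - N (x t - xh t) *ᵥ (x t - xh t)) t := by
  refine (hx.sub hxh).congr_deriv ?_
  simp only [map_sub, mulVec_sub, sub_mulVec]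
  abel

lemma isUnit_det_of_coercive {n : ℕ} {P : Matrix (Fin n) (Fin n) ℝ} {α : ℝ} (hα : 0 < α)
    (hP : ∀ v, α * eucNorm v ^ 2 ≤ v ⬝ᵥ P *ᵥ v) : IsUnit P.det := by
  refine isUnit_iff_ne_zero.mpr fun hdet => ?_
  obtain ⟨v, hv, hPv⟩ := exists_mulVec_eq_zero_iff.mpr hdet
  have hpos : 0 < eucNorm v := by
    rw [eucNorm_eq_norm, norm_pos_iff]
    simpa using hv
  have := hP v
  rw [hPv, dotProduct_zero] at this
  linarith [mul_pos hα (pow_pos hpos 2)]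

lemma abs_dotProduct_mulVec_le {n : ℕ} {P : Matrix (Fin n) (Fin n) ℝ} {α : ℝ} (hα : 0 ≤ α)
    (hPsymm : P.IsSymm) (hnn : ∀ v, 0 ≤ v ⬝ᵥ P *ᵥ v) (hP : ∀ v, v ⬝ᵥ P *ᵥ v ≤ α * eucNorm v ^ 2)
    (v w : Fin n → ℝ) : |v ⬝ᵥ P *ᵥ w| ≤ α * eucNorm v * eucNorm w := by
  have := eucNorm_nonneg v
  have := eucNorm_nonneg w
  refine abs_le_of_sq_le_sq ?_ (by positivity)
  calc (v ⬝ᵥ P *ᵥ w) ^ 2 ≤ (v ⬝ᵥ P *ᵥ v) * (w ⬝ᵥ P *ᵥ w) := hPsymm.dotProduct_mulVec_sq_le hnn v w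
    _ ≤ (α * eucNorm v ^ 2) * (α * eucNorm w ^ 2) :=
        mul_le_mul (hP v) (hP w) (hnn w) (by positivity)
    _ = (α * eucNorm v * eucNorm w) ^ 2 := by ring

lemma dotProduct_mulVec_observer_error_le {n p : ℕ} {A : Matrix (Fin n) (Fin n) ℝ}
    {C : Matrix (Fin p) (Fin n) ℝ} {N : (Fin n → ℝ) →ₗ[ℝ] Matrix (Fin n) (Fin n) ℝ}
    {P : Matrix (Fin n) (Fin n) ℝ} {R L : Matrix (Fin n) (Fin p) ℝ} {α₂ α₃ γ : ℝ}
    (hα₂ : 0 ≤ α₂) (hPsymm : P.IsSymm) (hnn : ∀ v, 0 ≤ v ⬝ᵥ P *ᵥ v)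
    (hP : ∀ v, v ⬝ᵥ P *ᵥ v ≤ α₂ * eucNorm v ^ 2) (hPL : P * L = R)
    (hNγ : ∀ v, frobNorm (N v) ≤ γ * eucNorm v) {y e : Fin n → ℝ}
    (hLMI : 2 * (e ⬝ᵥ P *ᵥ (A *ᵥ e + N e *ᵥ y + N y *ᵥ e)) + 2 * (e ⬝ᵥ R *ᵥ (C *ᵥ e))
      ≤ -α₃ * eucNorm e ^ 2) :
    2 * (e ⬝ᵥ P *ᵥ (A *ᵥ e + N e *ᵥ y + N y *ᵥ e + L *ᵥ (C *ᵥ e) - N e *ᵥ e))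
      ≤ (-α₃ + 2 * γ * α₂ * eucNorm e) * eucNorm e ^ 2 := by
  have hR : e ⬝ᵥ P *ᵥ (L *ᵥ (C *ᵥ e)) = e ⬝ᵥ R *ᵥ (C *ᵥ e) := by
    rw [mulVec_mulVec, hPL]
  have hcubic : -(e ⬝ᵥ P *ᵥ (N e *ᵥ e)) ≤ γ * α₂ * eucNorm e ^ 3 := by
    have hNe : eucNorm (N e *ᵥ e) ≤ γ * eucNorm e * eucNorm e :=
      (eucNorm_mulVec_le _ _).trans (mul_le_mul_of_nonneg_right (hNγ e) (eucNorm_nonneg e))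
    have := (neg_le_abs _).trans (abs_dotProduct_mulVec_le hα₂ hPsymm hnn hP e (N e *ᵥ e))
    calc -(e ⬝ᵥ P *ᵥ (N e *ᵥ e)) ≤ α₂ * eucNorm e * eucNorm (N e *ᵥ e) := this
      _ ≤ α₂ * eucNorm e * (γ * eucNorm e * eucNorm e) :=
          mul_le_mul_of_nonneg_left hNe (mul_nonneg hα₂ (eucNorm_nonneg e))
      _ = γ * α₂ * eucNorm e ^ 3 := by ring
  rw [mulVec_sub, mulVec_add, dotProduct_sub, dotProduct_add, hR]
  linarith

lemma le_sqrt_mul_exp_of_mul_sq_le {α₁ m β s t : ℝ} (hα₁ : 0 < α₁) (hm : 0 ≤ m)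
    (h : α₁ * s ^ 2 ≤ m * Real.exp (-(2 * β) * t)) :
    s ≤ Real.sqrt (m / α₁) * Real.exp (-β * t) := by
  refine (le_abs_self s).trans (abs_le_of_sq_le_sq ?_ (by positivity))
  have hexp : Real.exp (-β * t) ^ 2 = Real.exp (-(2 * β) * t) := by
    rw [← Real.exp_nat_mul]
    ring_nf
  rw [mul_pow, Real.sq_sqrt (div_nonneg hm hα₁.le), hexp, div_mul_eq_mul_div, le_div_iff₀ hα₁]
  linarith

lemma exists_exp_bound_of_lyapunov {V V' s : ℝ → ℝ} {α₁ α₂ α₃ k : ℝ}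
    (hα₁ : 0 < α₁) (hα₂ : 0 < α₂) (hα₃ : 0 < α₃) (hs : ∀ t, 0 ≤ s t)
    (hV : ∀ t, HasDerivAt V (V' t) t) (hlow : ∀ t, α₁ * s t ^ 2 ≤ V t)
    (hup : ∀ t, V t ≤ α₂ * s t ^ 2) (hV' : ∀ t, 0 ≤ t → V' t ≤ (-α₃ + k * s t) * s t ^ 2)
    (h0 : s 0 < α₃ / k * Real.sqrt (α₁ / α₂)) :
    ∃ M β : ℝ, 0 < β ∧ ∀ t, 0 ≤ t → s t ≤ M * Real.exp (-β * t) := by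
  set b := α₃ / k
  have hb : 0 < b := pos_of_mul_pos_left ((hs 0).trans_lt h0) (Real.sqrt_nonneg _)
  have hk : 0 < k := (div_pos_iff_of_pos_left hα₃).mp hb
  have hV0 : V 0 < α₁ * b ^ 2 := by
    calc V 0 ≤ α₂ * s 0 ^ 2 := hup 0
      _ < α₂ * (b * Real.sqrt (α₁ / α₂)) ^ 2 := by gcongr; exact hs 0
      _ = α₁ * b ^ 2 := by rw [mul_pow, Real.sq_sqrt (by positivity)]; field_simp
  obtain ⟨m, hVm, hmb⟩ := exists_between hV0
  have hm : 0 < m := ((mul_nonneg hα₁.le (sq_nonneg _)).trans (hlow 0)).trans_lt hVm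
  -- on the sublevel set `{V ≤ m}` the error is at most `ρ`, and `k ρ < α₃`
  set ρ := Real.sqrt (m / α₁)
  have hkρ : k * ρ < α₃ := by
    have hρb : ρ < b := (Real.sqrt_lt' hb).mpr ((div_lt_iff₀ hα₁).mpr (by linarith))
    calc k * ρ < k * b := by gcongr
      _ = α₃ := mul_div_cancel₀ α₃ hk.ne'
  set κ := (α₃ - k * ρ) / α₂
  have hκ : 0 < κ := div_pos (by linarith) hα₂
  have hdecay : ∀ t, 0 ≤ t → V t ≤ m → V' t ≤ -κ * V t := by
    intro t ht hVt
    have hst : s t ≤ ρ :=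
      (Real.le_sqrt (hs t) (by positivity)).mpr ((le_div_iff₀' hα₁).mpr ((hlow t).trans hVt))
    calc V' t ≤ (-α₃ + k * s t) * s t ^ 2 := hV' t ht
      _ ≤ -((α₃ - k * ρ) * s t ^ 2) := by
          nlinarith [mul_le_mul_of_nonneg_right (mul_le_mul_of_nonneg_left hst hk.le)
            (sq_nonneg (s t))]
      _ = -(κ * (α₂ * s t ^ 2)) := by rw [← mul_assoc, div_mul_cancel₀ _ hα₂.ne']
      _ ≤ -κ * V t := by nlinarith [mul_le_mul_of_nonneg_left (hup t) hκ.le]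
  refine ⟨ρ, κ / 4, by positivity, fun t ht => le_sqrt_mul_exp_of_mul_sq_le hα₁ hm.le ?_⟩
  calc α₁ * s t ^ 2 ≤ V t := hlow t
    _ ≤ m * Real.exp (-(κ / 2) * t) :=
        le_mul_exp_of_deriv_le_neg_mul hm (by positivity) (by linarith) hV hVm.le hdecay ht
    _ = m * Real.exp (-(2 * (κ / 4)) * t) := by ring_nf

lemma tendsto_zero_of_eucNorm_le_mul_exp {n : ℕ} {e : ℝ → Fin n → ℝ} {M β : ℝ} (hβ : 0 < β)
    (h : ∀ t, 0 ≤ t → eucNorm (e t) ≤ M * Real.exp (-β * t)) : Tendsto e atTop (𝓝 0) := by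
  have hexp : Tendsto (fun t => M * Real.exp (-β * t)) atTop (𝓝 0) := by
    simpa using (Real.tendsto_exp_neg_atTop_nhds_zero.comp
      (tendsto_id.const_mul_atTop hβ)).const_mul M
  have hLp : Tendsto (fun t => WithLp.toLp 2 (e t)) atTop (𝓝 0) :=
    squeeze_zero_norm' ((eventually_ge_atTop 0).mono fun t ht => eucNorm_eq_norm (e t) ▸ h t ht)
      hexp
  exact ((PiLp.continuous_ofLp 2 _).tendsto 0).comp hLp

theorem stmt8_general {n p : ℕ}
    (A : Matrix (Fin n) (Fin n) ℝ) (C : Matrix (Fin p) (Fin n) ℝ)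
    (N : (Fin n → ℝ) →ₗ[ℝ] Matrix (Fin n) (Fin n) ℝ)
    (γ : ℝ)
    (hγ : γ = sSup ((fun v : Fin n → ℝ => frobNorm (N v)) '' {v | eucNorm v = 1}))
    (d : Fin n → ℝ) (r : ℝ) (Y : Set (Fin n → ℝ))
    (hYball : {v : Fin n → ℝ | eucNorm (v - d) ≤ r} ⊆ Y)
    (α₁ α₂ α₃ : ℝ) (hα₁ : 0 < α₁) (hα₂ : 0 < α₂) (hα₃ : 0 < α₃)
    (P : Matrix (Fin n) (Fin n) ℝ) (hPsymm : P.IsSymm)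
    (R : Matrix (Fin n) (Fin p) ℝ)
    (hP : ∀ v : Fin n → ℝ,
      α₁ * eucNorm v ^ 2 ≤ v ⬝ᵥ P.mulVec v ∧ v ⬝ᵥ P.mulVec v ≤ α₂ * eucNorm v ^ 2)
    (hLMI : ∀ y ∈ Y, ∀ v : Fin n → ℝ,
      2 * (v ⬝ᵥ P.mulVec (A.mulVec v + (N v).mulVec y + (N y).mulVec v))
        + 2 * (v ⬝ᵥ R.mulVec (C.mulVec v)) ≤ -α₃ * eucNorm v ^ 2)
    (L : Matrix (Fin n) (Fin p) ℝ) (hL : L = P⁻¹ * R)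
    (x xh : ℝ → Fin n → ℝ)
    (hx : ∀ t : ℝ, HasDerivAt x (A.mulVec (x t) + (N (x t)).mulVec (x t)) t)
    (hxh : ∀ t : ℝ, HasDerivAt xh
      (A.mulVec (xh t) + (N (xh t)).mulVec (xh t)
        - L.mulVec (C.mulVec (x t) - C.mulVec (xh t))) t)
    (hxball : ∀ t : ℝ, 0 ≤ t → eucNorm (x t - d) ≤ r)
    (hinit : eucNorm (x 0 - xh 0) < α₃ / (2 * γ * α₂) * Real.sqrt (α₁ / α₂)) :
    (∃ M β : ℝ, 0 < β ∧ ∀ t : ℝ, 0 ≤ t →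
        eucNorm (x t - xh t) ≤ M * Real.exp (-β * t)) ∧
      Filter.Tendsto (fun t => x t - xh t) Filter.atTop (nhds 0) := by
  have hNγ : ∀ v, frobNorm (N v) ≤ γ * eucNorm v := hγ ▸ frobNorm_apply_le_sSup_mul N
  have hPnn : ∀ v, 0 ≤ v ⬝ᵥ P *ᵥ v := fun v => (by positivity : 0 ≤ α₁ * _).trans (hP v).1
  have hPL : P * L = R := by
    rw [hL, ← Matrix.mul_assoc, mul_nonsing_inv P (isUnit_det_of_coercive hα₁ fun v => (hP v).1),
      Matrix.one_mul]
  have he := fun t => hasDerivAt_observer_error A C L N (hx t) (hxh t)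
  obtain ⟨M, β, hβ, hbound⟩ := exists_exp_bound_of_lyapunov hα₁ hα₂ hα₃
    (fun t => eucNorm_nonneg _) (fun t => (he t).dotProduct_mulVec_self hPsymm)
    (fun t => (hP _).1) (fun t => (hP _).2)
    (fun t ht => dotProduct_mulVec_observer_error_le hα₂.le hPsymm hPnn (fun v => (hP v).2) hPL
      hNγ (hLMI _ (hYball (hxball t ht)) _)) hinit
  exact ⟨⟨M, β, hβ, hbound⟩, tendsto_zero_of_eucNorm_le_mul_exp hβ hbound⟩

/-- Local observer convergence: if the state stays in the invariant ball `B_r(d) ⊆ Y`,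
`P` satisfies `α₁I ⪯ P ⪯ α₂I` and the LMI `P A_y + A_yᵀ P + RC + CᵀRᵀ ⪯ −α₃ I` on `Y`,
`L = P⁻¹R`, and the initial error is small enough, then the observer error converges
to `0` exponentially. Here `γ = ‖N‖` is the operator norm of `N` into the Frobenius
norm, and `A_y v = Av + N(v)y + N(y)v`. -/
theorem stmt8 {n p : ℕ} (hn : 0 < n)
    (A : Matrix (Fin n) (Fin n) ℝ) (C : Matrix (Fin p) (Fin n) ℝ)
    (N : (Fin n → ℝ) →ₗ[ℝ] Matrix (Fin n) (Fin n) ℝ)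
    (hN : ∀ x : Fin n → ℝ, x ⬝ᵥ (N x).mulVec x = 0)
    (γ : ℝ)
    (hγ : γ = sSup ((fun v : Fin n → ℝ => frobNorm (N v)) '' {v | eucNorm v = 1}))
    (d : Fin n → ℝ) (r : ℝ) (Y : Set (Fin n → ℝ))
    (hYball : {v : Fin n → ℝ | eucNorm (v - d) ≤ r} ⊆ Y)
    (α₁ α₂ α₃ : ℝ) (hα₁ : 0 < α₁) (hα₂ : 0 < α₂) (hα₃ : 0 < α₃)
    (P : Matrix (Fin n) (Fin n) ℝ) (hPsymm : P.IsSymm)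
    (R : Matrix (Fin n) (Fin p) ℝ)
    (hP : ∀ v : Fin n → ℝ,
      α₁ * eucNorm v ^ 2 ≤ v ⬝ᵥ P.mulVec v ∧ v ⬝ᵥ P.mulVec v ≤ α₂ * eucNorm v ^ 2)
    (hLMI : ∀ y ∈ Y, ∀ v : Fin n → ℝ,
      2 * (v ⬝ᵥ P.mulVec (A.mulVec v + (N v).mulVec y + (N y).mulVec v))
        + 2 * (v ⬝ᵥ R.mulVec (C.mulVec v)) ≤ -α₃ * eucNorm v ^ 2)
    (L : Matrix (Fin n) (Fin p) ℝ) (hL : L = P⁻¹ * R)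
    (x xh : ℝ → Fin n → ℝ)
    (hx : ∀ t : ℝ, HasDerivAt x (A.mulVec (x t) + (N (x t)).mulVec (x t)) t)
    (hxh : ∀ t : ℝ, HasDerivAt xh
      (A.mulVec (xh t) + (N (xh t)).mulVec (xh t)
        - L.mulVec (C.mulVec (x t) - C.mulVec (xh t))) t)
    (hxball : ∀ t : ℝ, 0 ≤ t → eucNorm (x t - d) ≤ r)
    (hinit : eucNorm (x 0 - xh 0) < α₃ / (2 * γ * α₂) * Real.sqrt (α₁ / α₂)) :
    (∃ M β : ℝ, 0 < β ∧ ∀ t : ℝ, 0 ≤ t →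
        eucNorm (x t - xh t) ≤ M * Real.exp (-β * t)) ∧
      Filter.Tendsto (fun t => x t - xh t) Filter.atTop (nhds 0) :=
  stmt8_general A C N γ hγ d r Y hYball α₁ α₂ α₃ hα₁ hα₂ hα₃ P hPsymm R hP hLMI L hL x xh hx hxh
    hxball hinit
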